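/- Let X and Y be n×n complex Hermitian positive definite matrices and let X̄ and Ȳ be their realifications (real symmetric positive definite 2n×2n matrices). Then qre(X̄, Ȳ) = 2 · qre(X, Y), where qre(A, B) := Tr(A ln(A)) − Tr(A ln(B)) and ln is the matrix extension of the natural logarithm. -/

import Mathlib

open Matrix
open scoped ComplexOrder

/-- The matrix extension `F` of `f : ℝ → ℝ`: for Hermitian (or real symmetric)
`A = U Diag(λ) U*`, `F(A) := U Diag(f(λᵢ)) U*` (junk value `0` if `A` is not Hermitian).
In particular `matExt Real.log M` is the matrix logarithm `ln(M)` of a positive definite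
matrix `M`. -/
noncomputable def matExt {𝕜 : Type*} [RCLike 𝕜] {n : Type*} [Fintype n] [DecidableEq n]
    (f : ℝ → ℝ) (A : Matrix n n 𝕜) : Matrix n n 𝕜 :=
  if hA : A.IsHermitian then
    (hA.eigenvectorUnitary : Matrix n n 𝕜) *
      Matrix.diagonal (fun i => (f (hA.eigenvalues i) : 𝕜)) *
      star (hA.eigenvectorUnitary : Matrix n n 𝕜)
  else 0

/-- The quantum relative entropy `qre(A,B) := Tr(A ln A − A ln B)` of positive definite
matrices `A`, `B`. -/
noncomputable def qre {𝕜 : Type*} [RCLike 𝕜] {n : Type*} [Fintype n] [DecidableEq n]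
    (A B : Matrix n n 𝕜) : 𝕜 :=
  (A * matExt Real.log A - A * matExt Real.log B).trace

/-- The realification of a complex `n×n` matrix `X = X_r + i X_i`: the real `2n×2n` block
matrix `[[X_r, −X_i],[X_i, X_r]]`. -/
def realify {n : ℕ} (X : Matrix (Fin n) (Fin n) ℂ) :
    Matrix (Fin n ⊕ Fin n) (Fin n ⊕ Fin n) ℝ :=
  Matrix.fromBlocks (X.map Complex.re) (-(X.map Complex.im))
    (X.map Complex.im) (X.map Complex.re)

/-!
On Hermitian matrices, `matExt f` is the continuous functional calculus `cfc f`. Realification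
is a continuous `⋆`-algebra homomorphism over `ℝ` from complex `n×n` to real `2n×2n` matrices,
and such homomorphisms commute with `cfc`; hence `ln(X̄)` is the realification of `ln(X)`, and
`qre(X̄, Ȳ)` is the trace of the realification of `X ln X − X ln Y`, which is twice the real
part of its trace. That trace is real because the trace of a product of two Hermitian matrices
is real.
-/

theorem matExt_eq_cfc {𝕜 : Type*} [RCLike 𝕜] {n : Type*} [Fintype n] [DecidableEq n]
    (f : ℝ → ℝ) {A : Matrix n n 𝕜} (hA : A.IsHermitian) : matExt f A = cfc f A := by
  rw [hA.cfc_eq, matExt, dif_pos hA, IsHermitian.cfc, Unitary.conjStarAlgAut_apply]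
  rfl

theorem Matrix.isSelfAdjoint_trace_mul {𝕜 : Type*} [RCLike 𝕜] {n : Type*} [Fintype n]
    {A B : Matrix n n 𝕜} (hA : IsSelfAdjoint A) (hB : IsSelfAdjoint B) :
    IsSelfAdjoint (A * B).trace := by
  rw [IsSelfAdjoint, ← trace_conjTranspose, conjTranspose_mul, ← star_eq_conjTranspose,
    ← star_eq_conjTranspose, hA.star_eq, hB.star_eq, trace_mul_comm]

theorem isSelfAdjoint_qre {𝕜 : Type*} [RCLike 𝕜] {n : Type*} [Fintype n] [DecidableEq n]
    {A B : Matrix n n 𝕜} (hA : A.IsHermitian) (hB : B.IsHermitian) :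
    IsSelfAdjoint (qre A B) := by
  rw [qre, trace_sub, matExt_eq_cfc _ hA, matExt_eq_cfc _ hB]
  exact (isSelfAdjoint_trace_mul hA .cfc).sub (isSelfAdjoint_trace_mul hA .cfc)

section Realify

variable {n : ℕ}

theorem realify_conjTranspose (X : Matrix (Fin n) (Fin n) ℂ) :
    realify Xᴴ = (realify X)ᴴ := by
  ext (i | i) (j | j) <;> simp [realify]

theorem continuous_realify : Continuous (realify (n := n)) := by
  unfold realify
  fun_prop

theorem trace_realify (X : Matrix (Fin n) (Fin n) ℂ) :
    (realify X).trace = 2 * X.trace.re := by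
  simp [trace, realify, Fintype.sum_sum_type, Complex.re_sum, two_mul]

variable (n) in
def realifyStarAlgHom :
    Matrix (Fin n) (Fin n) ℂ →⋆ₐ[ℝ] Matrix (Fin n ⊕ Fin n) (Fin n ⊕ Fin n) ℝ where
  toFun := realify
  map_one' := by
    ext (i | i) (j | j) <;> simp [realify, one_apply, apply_ite Complex.im]
  map_mul' X Y := by
    ext (i | i) (j | j) <;>
      simp [realify, mul_apply, Complex.mul_re, Complex.mul_im, Finset.sum_add_distrib,
        sub_eq_add_neg] <;>
      ring
  map_zero' := by
    ext (i | i) (j | j) <;> simp [realify]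
  map_add' X Y := by
    ext (i | i) (j | j) <;> simp [realify, add_comm]
  commutes' r := by
    ext (i | i) (j | j) <;> simp [realify, algebraMap_matrix_apply, apply_ite Complex.im]
  map_star' := realify_conjTranspose

theorem realify_isHermitian {X : Matrix (Fin n) (Fin n) ℂ} (hX : X.IsHermitian) :
    (realify X).IsHermitian :=
  hX.isSelfAdjoint.map (realifyStarAlgHom n)

theorem matExt_realify (f : ℝ → ℝ) {X : Matrix (Fin n) (Fin n) ℂ} (hX : X.IsHermitian) :
    matExt f (realify X) = realify (matExt f X) := by
  rw [matExt_eq_cfc f hX, matExt_eq_cfc f (realify_isHermitian hX)]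
  exact ((realifyStarAlgHom n).map_cfc f X (X.finite_real_spectrum.continuousOn f)
    continuous_realify (hφa := realify_isHermitian hX)).symm

end Realify

/-- For complex Hermitian positive definite `X`, `Y`, the quantity `qre(X,Y)` is a real
number and `qre(X̄, Ȳ) = 2 qre(X,Y)`, where `X̄, Ȳ` are the realifications of `X, Y`. -/
theorem qre_realify {n : ℕ} (X Y : Matrix (Fin n) (Fin n) ℂ)
    (hX : X.PosDef) (hY : Y.PosDef) :
    (qre X Y).im = 0 ∧ qre (realify X) (realify Y) = 2 * (qre X Y).re := by
  refine ⟨Complex.conj_eq_iff_im.mp (isSelfAdjoint_qre hX.1 hY.1), ?_⟩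
  let φ := realifyStarAlgHom n
  calc qre (realify X) (realify Y)
      = (φ X * φ (matExt Real.log X) - φ X * φ (matExt Real.log Y)).trace := by
        rw [qre, matExt_realify _ hX.1, matExt_realify _ hY.1]
        rfl
    _ = (realify (X * matExt Real.log X - X * matExt Real.log Y)).trace := by
        rw [← map_mul, ← map_mul, ← map_sub]
        rfl
    _ = 2 * (qre X Y).re := trace_realify _
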